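/- Let J^α (α = 1,2,3) be an almost hypercomplex structure on an open set U ⊆ ℝ^{4r} and suppose Γ_{XY}^Z are smooth symmetric connection coefficients on U which leave the complex structures invariant: ∂_X J^α_Y^Z − Γ_{XY}^W J^α_W^Z + Γ_{XW}^Z J^α_Y^W = 0 on U for every α. Then Γ coincides with the Obata connection: Γ_{XY}^Z = Γ^{Ob}_{XY}^Z everywhere on U. That is, the Obata connection is the unique torsionless connection preserving a hypercomplex structure. -/

import Mathlib

noncomputable section

/-- The Levi-Civita symbol on `Fin 3`, with `ε 0 1 2 = 1`. -/
def epsLC (a b c : Fin 3) : ℝ :=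
  if (a, b, c) = ((0 : Fin 3), (1 : Fin 3), (2 : Fin 3)) ∨ (a, b, c) = (1, 2, 0) ∨ (a, b, c) = (2, 0, 1) then 1
  else if (a, b, c) = (2, 1, 0) ∨ (a, b, c) = (0, 2, 1) ∨ (a, b, c) = (1, 0, 2) then -1
  else 0

/-- Partial derivative `∂_i f` of a scalar function on `ℝ^n`. -/
def pd {n : ℕ} (i : Fin n) (f : (Fin n → ℝ) → ℝ) (x : Fin n → ℝ) : ℝ :=
  fderiv ℝ f x (Pi.single i 1)

/-- The diagonal Nijenhuis tensor `N_{XY}^Z` of a triple of (1,1)-tensor fields. -/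
def nijenhuis {n : ℕ} (J : Fin 3 → Fin n → Fin n → (Fin n → ℝ) → ℝ)
    (X Y Z : Fin n) (x : Fin n → ℝ) : ℝ :=
  (1 / 12) * ∑ α, ∑ W,
    (J α X W x * (pd W (J α Y Z) x - pd Y (J α W Z) x)
      - J α Y W x * (pd W (J α X Z) x - pd X (J α W Z) x))

/-- The Obata connection `Γ^{Ob}_{XY}^Z` of a triple of (1,1)-tensor fields. -/
def obata {n : ℕ} (J : Fin 3 → Fin n → Fin n → (Fin n → ℝ) → ℝ)
    (X Y Z : Fin n) (x : Fin n → ℝ) : ℝ :=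
  -(1 / 6) * ∑ α, ∑ W,
    ((pd X (J α Y W) x + pd Y (J α X W) x
        + (1 / 2) * ∑ β, ∑ γ, epsLC α β γ *
            ((∑ u, J β X u x * pd u (J γ Y W) x) + ∑ u, J β Y u x * pd u (J γ X W) x))
      * J α W Z x)

/-- An almost hypercomplex structure on an open set `U ⊆ ℝ^n`: a smooth family of three
(1,1)-tensor fields forming at every point of `U` a quaternionic triple. -/
def IsAlmostHypercomplexOn {n : ℕ} (J : Fin 3 → Fin n → Fin n → (Fin n → ℝ) → ℝ)
    (U : Set (Fin n → ℝ)) : Prop :=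
  (∀ α X Y, ContDiffOn ℝ (⊤ : ℕ∞) (J α X Y) U) ∧
  ∀ α β X Z, ∀ x ∈ U, ∑ W, J α X W x * J β W Z x =
    (if α = β then (-1 : ℝ) else 0) * (if X = Z then 1 else 0)
      + ∑ γ, epsLC α β γ * J γ X Z x

/-! Invariance of `J^α` says `∂_X J^α = [Γ_X, J^α]`, where `Γ_X` is the matrix
`(Γ_{XY}^W)_{Y,W}`. Substituted into Obata's formula this leaves a pointwise algebraic
expression in `Γ` and the `J^α`. The quaternion relations give `∑_α J^α J^α = -3` and
`ε^{αβγ} J^γ J^α = 2 J^β`; the first makes the terms `Γ_X J^α J^α` contribute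
`-3 Γ_{XY}^Z - 3 Γ_{YX}^Z = -6 Γ_{XY}^Z`, and by the symmetry of `Γ` all remaining terms cancel
in pairs, so `Γ^{Ob} = -(1/6)(-6 Γ) = Γ`. -/

theorem epsLC_self_left (a c : Fin 3) : epsLC a a c = 0 := by
  fin_cases a <;> fin_cases c <;> simp [epsLC]

theorem epsLC_self_right (a b : Fin 3) : epsLC a b a = 0 := by
  fin_cases a <;> fin_cases b <;> simp [epsLC]

theorem epsLC_swap_right (a b c : Fin 3) : epsLC a c b = -epsLC a b c := by
  fin_cases a <;> fin_cases b <;> fin_cases c <;> simp [epsLC]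

theorem sum_epsLC_mul_epsLC (b d : Fin 3) :
    ∑ a, ∑ c, epsLC a b c * epsLC c a d = if b = d then 2 else 0 := by
  fin_cases b <;> fin_cases d <;> simp [Fin.sum_univ_three, epsLC] <;> norm_num

theorem sum_epsLC_mul_swap (f : Fin 3 → Fin 3 → Fin 3 → ℝ) :
    ∑ α, ∑ β, ∑ γ, epsLC α β γ * f α γ β = -∑ α, ∑ β, ∑ γ, epsLC α β γ * f α β γ := by
  simp only [← Finset.sum_neg_distrib]
  refine Finset.sum_congr rfl fun α _ => ?_
  rw [Finset.sum_comm]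
  refine Finset.sum_congr rfl fun β _ => Finset.sum_congr rfl fun γ _ => ?_
  rw [epsLC_swap_right]
  ring

section

variable {ι : Type*} [Fintype ι]

/-- Obata's formula at a point, with `j α` in place of `J^α` and `D α u` in place of `∂_u J^α`. -/
def obataOf (j : Fin 3 → Matrix ι ι ℝ) (D : Fin 3 → ι → Matrix ι ι ℝ) (X Y Z : ι) : ℝ :=
  -(1 / 6) * ∑ α, ∑ W,
    ((D α X Y W + D α Y X W
        + (1 / 2) * ∑ β, ∑ γ, epsLC α β γ *
            ((∑ u, j β X u * D γ u Y W) + ∑ u, j β Y u * D γ u X W))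
      * j α W Z)

def obataHalf (j : Fin 3 → Matrix ι ι ℝ) (D : Fin 3 → ι → Matrix ι ι ℝ) (X : ι) :
    Matrix ι ι ℝ :=
  ∑ α, D α X * j α + (1 / 2 : ℝ) • ∑ α, ∑ β, ∑ γ, epsLC α β γ • ((∑ u, j β X u • D γ u) * j α)

theorem obataOf_eq_obataHalf (j : Fin 3 → Matrix ι ι ℝ) (D : Fin 3 → ι → Matrix ι ι ℝ)
    (X Y Z : ι) :
    obataOf j D X Y Z = -(1 / 6) * (obataHalf j D X Y Z + obataHalf j D Y X Z) := by
  unfold obataOf obataHalf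
  congr 1
  simp only [Matrix.add_apply, Matrix.sum_apply, Matrix.smul_apply, Matrix.mul_apply,
    smul_eq_mul]
  simp only [add_mul, mul_add, Finset.sum_add_distrib, Finset.mul_sum, Finset.sum_mul]
  simp_rw [Finset.sum_comm (s := (Finset.univ : Finset ι)) (t := (Finset.univ : Finset (Fin 3))),
    mul_assoc]
  ring

theorem sum_smul_mul_apply_of_symm {G : ι → Matrix ι ι ℝ} (hG : ∀ X Y W, G X Y W = G Y X W)
    (j : Fin 3 → Matrix ι ι ℝ) (X Y Z : ι) :
    (∑ β, (∑ u, j β X u • G u) * j β) Y Z = (∑ β, j β * G Y * j β) X Z := by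
  simp only [Matrix.sum_apply, Matrix.mul_apply, Matrix.smul_apply, smul_eq_mul, hG]

/-- Exchanging `X ↔ Y` together with `β ↔ γ` fixes the summand, by the symmetry of `G`, while `ε`
changes sign. -/
theorem sum_epsLC_smul_mul_apply_add_swap {G : ι → Matrix ι ι ℝ} (hG : ∀ X Y W, G X Y W = G Y X W)
    (j : Fin 3 → Matrix ι ι ℝ) (X Y Z : ι) :
    (∑ α, ∑ β, ∑ γ, epsLC α β γ • (j γ * (∑ u, j β Y u • G u) * j α)) X Z
      + (∑ α, ∑ β, ∑ γ, epsLC α β γ • (j γ * (∑ u, j β X u • G u) * j α)) Y Z = 0 := by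
  have hinner : ∀ β γ W, ∑ V, j γ X V * ∑ u, j β Y u * G u V W
      = ∑ V, j β Y V * ∑ u, j γ X u * G u V W := by
    intro β γ W
    simp only [Finset.mul_sum]
    rw [Finset.sum_comm]
    refine Finset.sum_congr rfl fun V _ => Finset.sum_congr rfl fun u _ => ?_
    rw [hG]; ring
  simp only [Matrix.sum_apply, Matrix.mul_apply, Matrix.smul_apply, smul_eq_mul, hinner]
  rw [sum_epsLC_mul_swap fun α β γ => ∑ W, (∑ V, j γ Y V * ∑ u, j β X u * G u V W) * j α W Z,
    neg_add_cancel]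

variable [DecidableEq ι]

def IsQuaternionicTriple (j : Fin 3 → Matrix ι ι ℝ) : Prop :=
  ∀ α β, j α * j β = (if α = β then (-1 : ℝ) else 0) • 1 + ∑ γ, epsLC α β γ • j γ

theorem isQuaternionicTriple_iff (j : Fin 3 → Matrix ι ι ℝ) :
    IsQuaternionicTriple j ↔ ∀ α β A C, ∑ W, j α A W * j β W C =
      (if α = β then (-1 : ℝ) else 0) * (if A = C then 1 else 0) + ∑ γ, epsLC α β γ * j γ A C := by
  simp only [IsQuaternionicTriple, ← Matrix.ext_iff, Matrix.mul_apply, Matrix.add_apply,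
    Matrix.sum_apply, Matrix.smul_apply, smul_eq_mul, Matrix.one_apply]

namespace IsQuaternionicTriple

variable {j : Fin 3 → Matrix ι ι ℝ}

theorem sum_mul_self (hj : IsQuaternionicTriple j) : ∑ α, j α * j α = (-3 : ℝ) • 1 := by
  calc ∑ α, j α * j α = ∑ _α : Fin 3, (-1 : ℝ) • (1 : Matrix ι ι ℝ) :=
        Finset.sum_congr rfl fun α _ => by simp [hj α α, epsLC_self_left]
    _ = (-3 : ℝ) • 1 := by
        simp only [Finset.sum_const, Finset.card_univ, Fintype.card_fin]; module

theorem sum_epsLC_smul_mul (hj : IsQuaternionicTriple j) (β : Fin 3) :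
    ∑ α, ∑ γ, epsLC α β γ • (j γ * j α) = (2 : ℝ) • j β := by
  calc ∑ α, ∑ γ, epsLC α β γ • (j γ * j α)
      = ∑ α, ∑ γ, ∑ δ, (epsLC α β γ * epsLC γ α δ) • j δ := by
        refine Finset.sum_congr rfl fun α _ => Finset.sum_congr rfl fun γ _ => ?_
        rw [hj γ α, smul_add, Finset.smul_sum]
        split_ifs with h
        · simp [h, epsLC_self_right, smul_smul]
        · simp [smul_smul]
    _ = ∑ δ, (∑ α, ∑ γ, epsLC α β γ * epsLC γ α δ) • j δ := by
        simp only [Finset.sum_smul]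
        exact (Finset.sum_congr rfl fun _ _ => Finset.sum_comm).trans Finset.sum_comm
    _ = (2 : ℝ) • j β := by simp [sum_epsLC_mul_epsLC]

theorem sum_commutator_mul_self (hj : IsQuaternionicTriple j) (A : Matrix ι ι ℝ) :
    ∑ α, (A * j α - j α * A) * j α = (-3 : ℝ) • A - ∑ α, j α * A * j α := by
  calc ∑ α, (A * j α - j α * A) * j α = A * ∑ α, j α * j α - ∑ α, j α * A * j α := by
        simp only [sub_mul, Finset.sum_sub_distrib, mul_assoc, Finset.mul_sum]
    _ = (-3 : ℝ) • A - ∑ α, j α * A * j α := by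
        rw [hj.sum_mul_self, Matrix.mul_smul, mul_one]

theorem sum_epsLC_smul_commutator_mul (hj : IsQuaternionicTriple j) (A : Matrix ι ι ℝ)
    (β : Fin 3) :
    ∑ α, ∑ γ, epsLC α β γ • ((A * j γ - j γ * A) * j α)
      = (2 : ℝ) • (A * j β) - ∑ α, ∑ γ, epsLC α β γ • (j γ * A * j α) := by
  calc ∑ α, ∑ γ, epsLC α β γ • ((A * j γ - j γ * A) * j α)
      = A * ∑ α, ∑ γ, epsLC α β γ • (j γ * j α) - ∑ α, ∑ γ, epsLC α β γ • (j γ * A * j α) := by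
        simp only [sub_mul, smul_sub, Finset.sum_sub_distrib, Finset.mul_sum, Matrix.mul_smul,
          mul_assoc]
    _ = (2 : ℝ) • (A * j β) - ∑ α, ∑ γ, epsLC α β γ • (j γ * A * j α) := by
        rw [hj.sum_epsLC_smul_mul, Matrix.mul_smul]

end IsQuaternionicTriple

theorem IsQuaternionicTriple.obataHalf_commutator {j : Fin 3 → Matrix ι ι ℝ}
    (hj : IsQuaternionicTriple j) (G : ι → Matrix ι ι ℝ) (X : ι) :
    obataHalf j (fun α u => G u * j α - j α * G u) X =
      (-3 : ℝ) • G X - ∑ α, j α * G X * j α + ∑ β, (∑ u, j β X u • G u) * j β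
        - (1 / 2 : ℝ) • ∑ α, ∑ β, ∑ γ, epsLC α β γ • (j γ * (∑ u, j β X u • G u) * j α) := by
  set H : Fin 3 → Matrix ι ι ℝ := fun β => ∑ u, j β X u • G u
  have hH : ∀ β γ, ∑ u, j β X u • (G u * j γ - j γ * G u) = H β * j γ - j γ * H β := by
    intro β γ
    simp only [H, smul_sub, Finset.sum_sub_distrib, Finset.sum_mul, Finset.mul_sum, smul_mul_assoc,
      mul_smul_comm]
  have hε : ∑ α, ∑ β, ∑ γ, epsLC α β γ • ((H β * j γ - j γ * H β) * j α)
      = ∑ β, ((2 : ℝ) • (H β * j β) - ∑ α, ∑ γ, epsLC α β γ • (j γ * H β * j α)) :=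
    Finset.sum_comm.trans (Finset.sum_congr rfl fun β _ => hj.sum_epsLC_smul_commutator_mul _ β)
  unfold obataHalf
  rw [hj.sum_commutator_mul_self]
  simp only [hH]
  rw [hε, Finset.sum_sub_distrib, Finset.sum_comm (f := fun β α => ∑ γ, epsLC α β γ • _),
    ← Finset.smul_sum]
  module

theorem IsQuaternionicTriple.obataOf_commutator {j : Fin 3 → Matrix ι ι ℝ}
    (hj : IsQuaternionicTriple j) {G : ι → Matrix ι ι ℝ} (hG : ∀ X Y W, G X Y W = G Y X W)
    (X Y Z : ι) :
    obataOf j (fun α u => G u * j α - j α * G u) X Y Z = G X Y Z := by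
  rw [obataOf_eq_obataHalf, hj.obataHalf_commutator, hj.obataHalf_commutator]
  simp only [Matrix.sub_apply, Matrix.add_apply, Matrix.smul_apply, smul_eq_mul]
  rw [sum_smul_mul_apply_of_symm hG, sum_smul_mul_apply_of_symm hG, hG Y X Z]
  linear_combination (1 / 12 : ℝ) * sum_epsLC_smul_mul_apply_add_swap hG j X Y Z

end

theorem obata_eq_obataOf {n : ℕ} (J : Fin 3 → Fin n → Fin n → (Fin n → ℝ) → ℝ)
    (X Y Z : Fin n) (x : Fin n → ℝ) :
    obata J X Y Z x
      = obataOf (fun α A B => J α A B x) (fun α u A B => pd u (J α A B) x) X Y Z :=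
  rfl

theorem stmt_7_general (r : ℕ) (U : Set (Fin (4 * r) → ℝ))
    (J : Fin 3 → Fin (4 * r) → Fin (4 * r) → (Fin (4 * r) → ℝ) → ℝ)
    (hJ : IsAlmostHypercomplexOn J U)
    (Γ : Fin (4 * r) → Fin (4 * r) → Fin (4 * r) → (Fin (4 * r) → ℝ) → ℝ)
    (hΓsym : ∀ X Y Z, ∀ x ∈ U, Γ X Y Z x = Γ Y X Z x)
    (hcov : ∀ α X Y Z, ∀ x ∈ U,
      pd X (J α Y Z) x
        - (∑ W, Γ X Y W x * J α W Z x)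
        + (∑ W, Γ X W Z x * J α Y W x) = 0) :
    ∀ X Y Z, ∀ x ∈ U, Γ X Y Z x = obata J X Y Z x := by
  intro X Y Z x hx
  set j : Fin 3 → Matrix (Fin (4 * r)) (Fin (4 * r)) ℝ := fun α A B => J α A B x
  set G : Fin (4 * r) → Matrix (Fin (4 * r)) (Fin (4 * r)) ℝ := fun u A B => Γ u A B x
  have hj : IsQuaternionicTriple j :=
    (isQuaternionicTriple_iff j).2 fun α β A C => hJ.2 α β A C x hx
  have hD : (fun α u A B => pd u (J α A B) x) = fun α u => G u * j α - j α * G u := by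
    funext α u A B
    have := hcov α u A B x hx
    simp only [Matrix.sub_apply, Matrix.mul_apply]
    simp only [G, j, mul_comm (J α A _ x)]
    linarith
  rw [obata_eq_obataOf, hD, hj.obataOf_commutator fun A B W => hΓsym A B W x hx]

/-- if smooth symmetric connection coefficients `Γ` leave the complex
structures of an almost hypercomplex structure invariant on an open `U ⊆ ℝ^{4r}`, then
`Γ` coincides with the Obata connection on `U` (uniqueness of the torsionless connection
preserving a hypercomplex structure). -/
theorem stmt_7 (r : ℕ) (U : Set (Fin (4 * r) → ℝ)) (hU : IsOpen U)
    (J : Fin 3 → Fin (4 * r) → Fin (4 * r) → (Fin (4 * r) → ℝ) → ℝ)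
    (hJ : IsAlmostHypercomplexOn J U)
    (Γ : Fin (4 * r) → Fin (4 * r) → Fin (4 * r) → (Fin (4 * r) → ℝ) → ℝ)
    (hΓsmooth : ∀ X Y Z, ContDiffOn ℝ (⊤ : ℕ∞) (Γ X Y Z) U)
    (hΓsym : ∀ X Y Z, ∀ x ∈ U, Γ X Y Z x = Γ Y X Z x)
    (hcov : ∀ α X Y Z, ∀ x ∈ U,
      pd X (J α Y Z) x
        - (∑ W, Γ X Y W x * J α W Z x)
        + (∑ W, Γ X W Z x * J α Y W x) = 0) :
    ∀ X Y Z, ∀ x ∈ U, Γ X Y Z x = obata J X Y Z x :=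
  stmt_7_general r U J hJ Γ hΓsym hcov
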